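/- arXiv:2210.14700 — 9 statements merged into one kernel-verified Lean document; each statement's English description precedes it below -/
import Mathlib

section
/- Let E be a real inner product space, let β > 0, L > 0, δ ≥ 0, and let F, G : E → ℝ be differentiable functions such that the gradient ∇G is Lipschitz with constant L and ‖∇G(x) − ∇F(x)‖ ≤ δ for every x ∈ E. Define sequences (w_k) and (v_k) in E by w_{k+1} = w_k − β ∇G(w_k), v_{k+1} = v_k − β ∇F(v_k), with w_0 = v_0. Then for every k ≥ 0, ‖w_k − v_k‖ ≤ (δ / L) · ((β L + 1)^k − 1). (This is inequality (34) of Lemma 3 in the paper, bounding the divergence between local gradient descent on a device loss G = F_n and gradient descent on the global loss F, with L = L_n and δ = δ_n.) -/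
open Finset

/-- Lemma 3, inequality (34): divergence between gradient descent on the device loss `G`
and on the global loss `F`. -/
theorem local_vs_centralized_gd_divergence
    {E : Type*} [NormedAddCommGroup E] [InnerProductSpace ℝ E] [CompleteSpace E]
    (β L δ : ℝ) (hβ : 0 < β) (hL : 0 < L) (hδ : 0 ≤ δ)
    (F G : E → ℝ) (hF : Differentiable ℝ F) (hG : Differentiable ℝ G)
    (hLip : ∀ x y, ‖gradient G x - gradient G y‖ ≤ L * ‖x - y‖)
    (hδb : ∀ x, ‖gradient G x - gradient F x‖ ≤ δ)
    (w v : ℕ → E) (h0 : w 0 = v 0)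
    (hw : ∀ k, w (k + 1) = w k - β • gradient G (w k))
    (hv : ∀ k, v (k + 1) = v k - β • gradient F (v k)) :
    ∀ k : ℕ, ‖w k - v k‖ ≤ (δ / L) * ((β * L + 1) ^ k - 1) := by
  intro k
  induction k with
  | zero => simp [h0]
  | succ k ih =>
      have key : w (k + 1) - v (k + 1)
          = (w k - v k) - β • ((gradient G (w k) - gradient G (v k))
              + (gradient G (v k) - gradient F (v k))) := by
        rw [hw, hv]; module
      have hb : ‖w (k + 1) - v (k + 1)‖
          ≤ ‖w k - v k‖ + β * (L * ‖w k - v k‖ + δ) := by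
        rw [key]
        calc ‖(w k - v k) - β • ((gradient G (w k) - gradient G (v k))
                + (gradient G (v k) - gradient F (v k)))‖
            ≤ ‖w k - v k‖ + ‖β • ((gradient G (w k) - gradient G (v k))
                + (gradient G (v k) - gradient F (v k)))‖ := norm_sub_le _ _
          _ ≤ ‖w k - v k‖ + β * (L * ‖w k - v k‖ + δ) := by
              gcongr
              rw [norm_smul, Real.norm_eq_abs, abs_of_pos hβ]
              gcongr
              calc ‖(gradient G (w k) - gradient G (v k))
                    + (gradient G (v k) - gradient F (v k))‖
                  ≤ ‖gradient G (w k) - gradient G (v k)‖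
                    + ‖gradient G (v k) - gradient F (v k)‖ := norm_add_le _ _
                _ ≤ L * ‖w k - v k‖ + δ := add_le_add (hLip _ _) (hδb _)
      have h1 : (0:ℝ) < β * L := mul_pos hβ hL
      calc ‖w (k + 1) - v (k + 1)‖ ≤ ‖w k - v k‖ + β * (L * ‖w k - v k‖ + δ) := hb
        _ = (1 + β * L) * ‖w k - v k‖ + β * δ := by ring
        _ ≤ (1 + β * L) * ((δ / L) * ((β * L + 1) ^ k - 1)) + β * δ := by
            have hnn : (0:ℝ) ≤ 1 + β * L := by linarith
            have := mul_le_mul_of_nonneg_left ih hnn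
            linarith
        _ = (δ / L) * ((β * L + 1) ^ (k + 1) - 1) + (β * δ - (δ / L) * (β * L)) := by
            ring
        _ = (δ / L) * ((β * L + 1) ^ (k + 1) - 1) := by
            field_simp
            ring
end

section
/- Let E be a real inner product space, let β > 0, L > 0, ε ≥ 0, and let F, F̃ : E → ℝ be differentiable functions such that the gradient ∇F is Lipschitz with constant L and ‖∇F̃(x) − ∇F(x)‖ ≤ ε for every x ∈ E. Define sequences (w̃_k) and (w_k) in E by w̃_{k+1} = w̃_k − β ∇F̃(w̃_k), w_{k+1} = w_k − β ∇F(w_k), with w̃_0 = w_0. Then for every k ≥ 0, ‖w̃_k − w_k‖ ≤ (ε / L) · ((β L + 1)^k − 1). (This is inequality (35) of Lemma 3 in the paper in its deterministic form, with F = F_n the exact local loss, F̃ = F̃_n the mini-batch loss, L = L_n and ε = σ_n / √(D̃_n).) -/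
open Finset

/-- Lemma 3, inequality (35) (deterministic form): divergence between gradient descent on the
mini-batch loss `F̃` and on the exact local loss `F`. -/
theorem minibatch_vs_exact_gd_divergence
    {E : Type*} [NormedAddCommGroup E] [InnerProductSpace ℝ E] [CompleteSpace E]
    (β L ε : ℝ) (hβ : 0 < β) (hL : 0 < L) (hε : 0 ≤ ε)
    (F Ftilde : E → ℝ) (hF : Differentiable ℝ F) (hFt : Differentiable ℝ Ftilde)
    (hLip : ∀ x y, ‖gradient F x - gradient F y‖ ≤ L * ‖x - y‖)
    (hεb : ∀ x, ‖gradient Ftilde x - gradient F x‖ ≤ ε)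
    (wt w : ℕ → E) (h0 : wt 0 = w 0)
    (hwt : ∀ k, wt (k + 1) = wt k - β • gradient Ftilde (wt k))
    (hw : ∀ k, w (k + 1) = w k - β • gradient F (w k)) :
    ∀ k : ℕ, ‖wt k - w k‖ ≤ (ε / L) * ((β * L + 1) ^ k - 1) := by
  intro k
  induction k with
  | zero => simp [h0]
  | succ k ih =>
    have key : wt (k + 1) - w (k + 1) =
        (wt k - w k) - β • (gradient F (wt k) - gradient F (w k))
          - β • (gradient Ftilde (wt k) - gradient F (wt k)) := by
      rw [hwt, hw]
      module
    have h1 : ‖wt (k + 1) - w (k + 1)‖ ≤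
        ‖wt k - w k‖ + β * ‖gradient F (wt k) - gradient F (w k)‖
          + β * ‖gradient Ftilde (wt k) - gradient F (wt k)‖ := by
      rw [key]
      calc _ ≤ ‖(wt k - w k) - β • (gradient F (wt k) - gradient F (w k))‖
              + ‖β • (gradient Ftilde (wt k) - gradient F (wt k))‖ := norm_sub_le _ _
        _ ≤ ‖wt k - w k‖ + ‖β • (gradient F (wt k) - gradient F (w k))‖
              + ‖β • (gradient Ftilde (wt k) - gradient F (wt k))‖ := by
            gcongr; exact norm_sub_le _ _
        _ = _ := by rw [norm_smul, norm_smul, Real.norm_eq_abs, abs_of_pos hβ]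
    have h2 : ‖wt (k + 1) - w (k + 1)‖ ≤ (1 + β * L) * ‖wt k - w k‖ + β * ε := by
      calc _ ≤ ‖wt k - w k‖ + β * (L * ‖wt k - w k‖) + β * ε := by
            refine h1.trans ?_; gcongr
            · exact hLip _ _
            · exact hεb _
        _ = (1 + β * L) * ‖wt k - w k‖ + β * ε := by ring
    have hbl : (0:ℝ) < 1 + β * L := by positivity
    calc ‖wt (k + 1) - w (k + 1)‖
        ≤ (1 + β * L) * ((ε / L) * ((β * L + 1) ^ k - 1)) + β * ε := by
          refine h2.trans ?_; gcongr
      _ = (ε / L) * ((β * L + 1) ^ (k + 1) - 1) := by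
          field_simp
          ring
end

section
/- Let E be a real inner product space, β > 0, K ≥ 0, and let n range over a finite index set of size N. For each n let p_n ≥ 0 with Σ_n p_n = 1, let L_n > 0, σ_n ≥ 0, δ_n ≥ 0, D̃_n > 0, and let F, F_n, F̃_n : E → ℝ be differentiable functions such that ∇F_n is Lipschitz with constant L_n, ‖∇F̃_n(x) − ∇F_n(x)‖ ≤ σ_n / √(D̃_n) for all x, and ‖∇F_n(x) − ∇F(x)‖ ≤ δ_n for all x. Starting from a common point v_0, define for each n the local trajectory w̃_n^{k+1} = w̃_n^k − β ∇F̃_n(w̃_n^k) with w̃_n^0 = v_0, and the centralized trajectory v^{k+1} = v^k − β ∇F(v^k) with v^0 = v_0. Then ‖Σ_n p_n w̃_n^K − v^K‖ ≤ Σ_n p_n (σ_n / (L_n √(D̃_n)) + δ_n / L_n) ((β L_n + 1)^K − 1). (This is Theorem 1 of the paper, with p_n = a_{m,n} D̃_n / Σ_n a_{m,n} D̃_n the aggregation weights of the devices associated with gateway m.) -/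
open Finset

/-- Theorem 1 of the paper: divergence between the aggregated local model and the
centralized gradient-descent model after `K` local epochs. -/
theorem fl_model_divergence_bound
    {E : Type*} [NormedAddCommGroup E] [InnerProductSpace ℝ E] [CompleteSpace E]
    (β : ℝ) (hβ : 0 < β) (K : ℕ) (N : ℕ)
    (p L σ δ Dt : Fin N → ℝ)
    (hp : ∀ n, 0 ≤ p n) (hpsum : ∑ n, p n = 1)
    (hL : ∀ n, 0 < L n) (hσ : ∀ n, 0 ≤ σ n) (hδ : ∀ n, 0 ≤ δ n) (hD : ∀ n, 0 < Dt n)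
    (F : E → ℝ) (Fn Ftn : Fin N → E → ℝ)
    (hF : Differentiable ℝ F) (hFn : ∀ n, Differentiable ℝ (Fn n))
    (hFtn : ∀ n, Differentiable ℝ (Ftn n))
    (hLip : ∀ n x y, ‖gradient (Fn n) x - gradient (Fn n) y‖ ≤ L n * ‖x - y‖)
    (hσb : ∀ n x, ‖gradient (Ftn n) x - gradient (Fn n) x‖ ≤ σ n / Real.sqrt (Dt n))
    (hδb : ∀ n x, ‖gradient (Fn n) x - gradient F x‖ ≤ δ n)
    (v0 : E) (wt : Fin N → ℕ → E) (v : ℕ → E)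
    (hw0 : ∀ n, wt n 0 = v0) (hv0 : v 0 = v0)
    (hwt : ∀ n k, wt n (k + 1) = wt n k - β • gradient (Ftn n) (wt n k))
    (hv : ∀ k, v (k + 1) = v k - β • gradient F (v k)) :
    ‖(∑ n, p n • wt n K) - v K‖ ≤
      ∑ n, p n * (σ n / (L n * Real.sqrt (Dt n)) + δ n / L n) * ((β * L n + 1) ^ K - 1) := by

  have key : ∀ n, ∀ k, ‖wt n k - v k‖ ≤
      ((σ n / Real.sqrt (Dt n) + δ n) / L n) * ((β * L n + 1) ^ k - 1) := by
    intro n k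
    have hLn := hL n
    have hsq : 0 < Real.sqrt (Dt n) := Real.sqrt_pos.mpr (hD n)
    have hc : 0 ≤ σ n / Real.sqrt (Dt n) + δ n :=
      add_nonneg (div_nonneg (hσ n) hsq.le) (hδ n)
    induction k with
    | zero => simp [hw0, hv0]
    | succ k ih =>
      have step : ‖wt n (k+1) - v (k+1)‖ ≤
          (β * L n + 1) * ‖wt n k - v k‖ + β * (σ n / Real.sqrt (Dt n) + δ n) := by
        rw [hwt, hv]
        have heq : wt n k - β • gradient (Ftn n) (wt n k) - (v k - β • gradient F (v k))
            = (wt n k - v k) - β • ((gradient (Ftn n) (wt n k) - gradient (Fn n) (wt n k))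
              + (gradient (Fn n) (wt n k) - gradient (Fn n) (v k))
              + (gradient (Fn n) (v k) - gradient F (v k))) := by
          module
        rw [heq]
        have h1 := hσb n (wt n k)
        have h2 := hLip n (wt n k) (v k)
        have h3 := hδb n (v k)
        calc ‖(wt n k - v k) - β • ((gradient (Ftn n) (wt n k) - gradient (Fn n) (wt n k))
              + (gradient (Fn n) (wt n k) - gradient (Fn n) (v k))
              + (gradient (Fn n) (v k) - gradient F (v k)))‖
            ≤ ‖wt n k - v k‖ + ‖β • ((gradient (Ftn n) (wt n k) - gradient (Fn n) (wt n k))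
              + (gradient (Fn n) (wt n k) - gradient (Fn n) (v k))
              + (gradient (Fn n) (v k) - gradient F (v k)))‖ := norm_sub_le _ _
          _ ≤ ‖wt n k - v k‖ + β * (‖gradient (Ftn n) (wt n k) - gradient (Fn n) (wt n k)‖
              + ‖gradient (Fn n) (wt n k) - gradient (Fn n) (v k)‖
              + ‖gradient (Fn n) (v k) - gradient F (v k)‖) := by
              rw [norm_smul, Real.norm_of_nonneg hβ.le]
              gcongr
              exact (norm_add_le _ _).trans (by gcongr; exact norm_add_le _ _)
          _ ≤ ‖wt n k - v k‖ + β * (σ n / Real.sqrt (Dt n) + L n * ‖wt n k - v k‖ + δ n) := by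
              gcongr
          _ = (β * L n + 1) * ‖wt n k - v k‖ + β * (σ n / Real.sqrt (Dt n) + δ n) := by ring
      have hq : (0:ℝ) ≤ β * L n + 1 := by positivity
      calc ‖wt n (k+1) - v (k+1)‖
          ≤ (β * L n + 1) * ‖wt n k - v k‖ + β * (σ n / Real.sqrt (Dt n) + δ n) := step
        _ ≤ (β * L n + 1) * (((σ n / Real.sqrt (Dt n) + δ n) / L n) * ((β * L n + 1) ^ k - 1))
            + β * (σ n / Real.sqrt (Dt n) + δ n) := by gcongr
        _ = ((σ n / Real.sqrt (Dt n) + δ n) / L n) * ((β * L n + 1) ^ (k+1) - 1) := by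
            field_simp
            ring
  have hdecomp : ∑ n, p n • (wt n K - v K) = (∑ n, p n • wt n K) - v K := by
    simp only [smul_sub, Finset.sum_sub_distrib, ← Finset.sum_smul, hpsum, one_smul]
  rw [← hdecomp]
  refine (norm_sum_le _ _).trans (Finset.sum_le_sum fun n _ => ?_)
  rw [norm_smul, Real.norm_of_nonneg (hp n)]
  have hLn := hL n
  have hsq : 0 < Real.sqrt (Dt n) := Real.sqrt_pos.mpr (hD n)
  have hco : σ n / (L n * Real.sqrt (Dt n)) + δ n / L n
      = (σ n / Real.sqrt (Dt n) + δ n) / L n := by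
    field_simp
  calc p n * ‖wt n K - v K‖
      ≤ p n * ((σ n / Real.sqrt (Dt n) + δ n) / L n * ((β * L n + 1) ^ K - 1)) :=
        mul_le_mul_of_nonneg_left (key n K) (hp n)
    _ = p n * (σ n / (L n * Real.sqrt (Dt n)) + δ n / L n) * ((β * L n + 1) ^ K - 1) := by
        rw [hco]; ring
end

section
/- Let M ≥ 1, T ≥ 1, C ≥ 0. For each m ∈ {1,…,M}, let Γ_m ∈ [0,1], Q_m(0) ≥ 0, indicators 𝟙_m^t ∈ {0,1}, and queue updates Q_m(t+1) = max{Q_m(t) − 𝟙_m^t + Γ_m, 0}. Let Ξ(t) = (1/2) Σ_{m=1}^M Q_m(t)², and suppose Ξ(t+1) − Ξ(t) ≤ C for every 0 ≤ t ≤ T−1. Then for every m, (1/T) Σ_{t=0}^{T−1} 𝟙_m^t ≥ Γ_m − √( 2C/T + Σ_{m'=1}^M Q_{m'}(0)² / T² ). (This is the deterministic core of inequality (39) of Theorem 2 in the paper, with C = H + V(φ^opt − τ^min): it bounds the shortfall of each gateway's empirical participation rate from its target rate.) -/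
/-!
Each virtual queue dominates its accumulated deficit: `Q_m(T) ≥ Q_m(0) + TΓ_m - ∑_{t<T} 𝟙_m^t`.
Telescoping the drift bound gives `∑_m Q_m(T)² ≤ ∑_m Q_m(0)² + 2TC`, so `Q_m(T)` is at most
`√(2TC + ∑_m Q_m(0)²)`; dividing the first inequality by `T` yields the shortfall bound.
-/

open Finset

theorem sub_le_sum_of_forall_succ_sub_le {α : Type*} [AddCommGroup α] [PartialOrder α]
    [IsOrderedAddMonoid α] {f g : ℕ → α} {T : ℕ} (h : ∀ t < T, f (t + 1) - f t ≤ g t) :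
    f T - f 0 ≤ ∑ t ∈ range T, g t := by
  rw [← sum_range_sub]
  exact sum_le_sum fun t ht => h t (mem_range.1 ht)

theorem le_add_mul_of_forall_succ_sub_le {f : ℕ → ℝ} {C : ℝ} {T : ℕ}
    (h : ∀ t < T, f (t + 1) - f t ≤ C) : f T ≤ f 0 + T * C := by
  have := sub_le_sum_of_forall_succ_sub_le h
  rw [sum_const, card_range, nsmul_eq_mul] at this
  linarith

theorem mul_sub_sum_le_sub_of_queue {q a : ℕ → ℝ} {γ : ℝ}
    (hq : ∀ t, q (t + 1) = max (q t - a t + γ) 0) (T : ℕ) :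
    T * γ - ∑ t ∈ range T, a t ≤ q T - q 0 := by
  have := sub_le_sum_of_forall_succ_sub_le (f := fun t => -q t) (g := fun t => a t - γ) (T := T)
    fun t _ => by rw [hq]; linarith [le_max_left (q t - a t + γ) 0]
  rw [sum_sub_distrib, sum_const, card_range, nsmul_eq_mul] at this
  linarith

theorem participation_rate_shortfall_bound_general
    (M T : ℕ) (hT : 1 ≤ T)
    (C : ℝ)
    (Γ : Fin M → ℝ)
    (Q : Fin M → ℕ → ℝ) (hQ0 : ∀ m, 0 ≤ Q m 0)
    (ind : Fin M → ℕ → ℝ)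
    (hupd : ∀ m t, Q m (t + 1) = max (Q m t - ind m t + Γ m) 0)
    (hdrift : ∀ t < T,
      (1 / 2) * (∑ m, (Q m (t + 1)) ^ 2) - (1 / 2) * (∑ m, (Q m t) ^ 2) ≤ C) :
    ∀ m, (1 / (T : ℝ)) * ∑ t ∈ Finset.range T, ind m t ≥
      Γ m - Real.sqrt (2 * C / (T : ℝ) + (∑ m', (Q m' 0) ^ 2) / (T : ℝ) ^ 2) := by
  intro m
  have hTpos : (0 : ℝ) < T := by exact_mod_cast hT
  set S := ∑ m', (Q m' 0) ^ 2
  have hdeficit := mul_sub_sum_le_sub_of_queue (hupd m) T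
  have hlyap : ∑ m', (Q m' T) ^ 2 ≤ 2 * T * C + S := by
    have := le_add_mul_of_forall_succ_sub_le (f := fun t => (1 / 2) * ∑ m', Q m' t ^ 2) hdrift
    linarith
  have hQT : Q m T ≤ Real.sqrt (2 * T * C + S) := by
    refine (le_abs_self _).trans ?_
    rw [← Real.sqrt_sq_eq_abs]
    exact Real.sqrt_le_sqrt <| (single_le_sum (f := fun i => Q i T ^ 2)
      (fun i _ => sq_nonneg _) (mem_univ m)).trans hlyap
  have hsqrt : Real.sqrt (2 * C / T + S / T ^ 2) = Real.sqrt (2 * T * C + S) / T := by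
    rw [show 2 * C / T + S / T ^ 2 = (2 * T * C + S) / T ^ 2 by field_simp,
      Real.sqrt_div' _ (by positivity), Real.sqrt_sq hTpos.le]
  rw [ge_iff_le, hsqrt, sub_le_iff_le_add, one_div, inv_mul_eq_div, ← add_div, le_div_iff₀ hTpos]
  linarith [hQ0 m]

/-- Deterministic core of inequality (39) of Theorem 2: shortfall of the empirical
participation rate of each gateway from its target rate. -/
theorem participation_rate_shortfall_bound
    (M T : ℕ) (hM : 1 ≤ M) (hT : 1 ≤ T)
    (C : ℝ) (hC : 0 ≤ C)
    (Γ : Fin M → ℝ) (hΓ : ∀ m, Γ m ∈ Set.Icc (0 : ℝ) 1)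
    (Q : Fin M → ℕ → ℝ) (hQ0 : ∀ m, 0 ≤ Q m 0)
    (ind : Fin M → ℕ → ℝ) (hind : ∀ m t, ind m t = 0 ∨ ind m t = 1)
    (hupd : ∀ m t, Q m (t + 1) = max (Q m t - ind m t + Γ m) 0)
    (hdrift : ∀ t < T,
      (1 / 2) * (∑ m, (Q m (t + 1)) ^ 2) - (1 / 2) * (∑ m, (Q m t) ^ 2) ≤ C) :
    ∀ m, (1 / (T : ℝ)) * ∑ t ∈ Finset.range T, ind m t ≥
      Γ m - Real.sqrt (2 * C / (T : ℝ) + (∑ m', (Q m' 0) ^ 2) / (T : ℝ) ^ 2) :=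
  participation_rate_shortfall_bound_general M T hT C Γ Q hQ0 ind hupd hdrift
end

section
/- Let E be a real inner product space, β > 0, L > 0, and let n range over a finite index set of size N with two weight vectors ξ_n ≥ 0 and q_n ≥ 0 each summing to 1. For each n let σ_n ≥ 0, D̃_n > 0, ρ_n ≥ 0, and let F_n, F̃_n : E → ℝ be differentiable with ∇F_n Lipschitz with constant L, ‖∇F̃_n(x) − ∇F_n(x)‖ ≤ σ_n / √(D̃_n) for all x, and ‖∇F_n(x)‖ ≤ ρ_n for all x. Starting from a common point u_0, define w̃_n^{k+1} = w̃_n^k − β ∇F̃_n(w̃_n^k) and w_n^{k+1} = w_n^k − β ∇F_n(w_n^k), both with initial value u_0. Then for every k ≥ 0, ‖Σ_n ξ_n w̃_n^k − Σ_n q_n w_n^k‖ ≤ (1/L) (Σ_n ξ_n σ_n / √(D̃_n)) ((β L + 1)^k − 1) + β k Σ_n |ξ_n − q_n| ρ_n. (This is the deterministic form of inequality (62) of Lemma 4 in the paper, with ξ_n the participation-rate weights and q_n = D_n / Σ_n D_n.) -/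
open Finset

/-- Lemma 4, inequality (62) (deterministic form): divergence between the ξ-weighted average of
mini-batch trajectories and the q-weighted average of exact local trajectories. -/
theorem two_weighted_averages_divergence
    {E : Type*} [NormedAddCommGroup E] [InnerProductSpace ℝ E] [CompleteSpace E]
    (β L : ℝ) (hβ : 0 < β) (hL : 0 < L)
    (N : ℕ) (ξ q : Fin N → ℝ)
    (hξ : ∀ n, 0 ≤ ξ n) (hξsum : ∑ n, ξ n = 1)
    (hq : ∀ n, 0 ≤ q n) (hqsum : ∑ n, q n = 1)
    (σ Dt ρ : Fin N → ℝ)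
    (hσ : ∀ n, 0 ≤ σ n) (hD : ∀ n, 0 < Dt n) (hρ : ∀ n, 0 ≤ ρ n)
    (Fn Ftn : Fin N → E → ℝ)
    (hFn : ∀ n, Differentiable ℝ (Fn n)) (hFtn : ∀ n, Differentiable ℝ (Ftn n))
    (hLip : ∀ n x y, ‖gradient (Fn n) x - gradient (Fn n) y‖ ≤ L * ‖x - y‖)
    (hσb : ∀ n x, ‖gradient (Ftn n) x - gradient (Fn n) x‖ ≤ σ n / Real.sqrt (Dt n))
    (hρb : ∀ n x, ‖gradient (Fn n) x‖ ≤ ρ n)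
    (u0 : E) (wt w : Fin N → ℕ → E)
    (hwt0 : ∀ n, wt n 0 = u0) (hw0 : ∀ n, w n 0 = u0)
    (hwt : ∀ n k, wt n (k + 1) = wt n k - β • gradient (Ftn n) (wt n k))
    (hw : ∀ n k, w n (k + 1) = w n k - β • gradient (Fn n) (w n k)) :
    ∀ k : ℕ, ‖(∑ n, ξ n • wt n k) - ∑ n, q n • w n k‖ ≤
      (1 / L) * (∑ n, ξ n * (σ n / Real.sqrt (Dt n))) * ((β * L + 1) ^ k - 1) +
        β * k * ∑ n, |ξ n - q n| * ρ n := by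
  -- per-device divergence bound
  have key : ∀ n k, ‖wt n k - w n k‖ ≤
      (σ n / Real.sqrt (Dt n)) / L * ((β * L + 1) ^ k - 1) := by
    intro n k
    induction k with
    | zero => simp [hwt0, hw0]
    | succ k ih =>
      have hs : 0 ≤ σ n / Real.sqrt (Dt n) :=
        div_nonneg (hσ n) (Real.sqrt_nonneg _)
      have hrw : wt n (k + 1) - w n (k + 1)
          = (wt n k - w n k) -
            β • (gradient (Ftn n) (wt n k) - gradient (Fn n) (w n k)) := by
        rw [hwt, hw]; module
      have h1 : ‖wt n (k + 1) - w n (k + 1)‖ ≤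
          ‖wt n k - w n k‖ + β * (σ n / Real.sqrt (Dt n) + L * ‖wt n k - w n k‖) := by
        rw [hrw]
        refine (norm_sub_le _ _).trans ?_
        rw [norm_smul, Real.norm_eq_abs, abs_of_pos hβ]
        gcongr
        calc ‖gradient (Ftn n) (wt n k) - gradient (Fn n) (w n k)‖
            ≤ ‖gradient (Ftn n) (wt n k) - gradient (Fn n) (wt n k)‖ +
              ‖gradient (Fn n) (wt n k) - gradient (Fn n) (w n k)‖ := by
              have := norm_sub_le_norm_sub_add_norm_sub (gradient (Ftn n) (wt n k))
                (gradient (Fn n) (wt n k)) (gradient (Fn n) (w n k))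
              linarith
          _ ≤ σ n / Real.sqrt (Dt n) + L * ‖wt n k - w n k‖ := by
              gcongr
              · exact hσb n _
              · exact hLip n _ _
      have hP : (1 : ℝ) ≤ (β * L + 1) ^ k :=
        one_le_pow₀ (by nlinarith)
      have hmul : (β * L + 1) * ‖wt n k - w n k‖ ≤
          (β * L + 1) * ((σ n / Real.sqrt (Dt n)) / L * ((β * L + 1) ^ k - 1)) := by
        apply mul_le_mul_of_nonneg_left ih (by nlinarith)
      rw [pow_succ]
      have hLne : (L : ℝ) ≠ 0 := ne_of_gt hL
      have hsL : σ n / Real.sqrt (Dt n) / L * L = σ n / Real.sqrt (Dt n) :=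
        div_mul_cancel₀ _ hLne
      nlinarith [h1, hmul, hsL, hP, hs, mul_pos hβ hL]
  -- drift bound for exact trajectories
  have drift : ∀ n k, ‖w n k - u0‖ ≤ β * k * ρ n := by
    intro n k
    induction k with
    | zero => simp [hw0]
    | succ k ih =>
      have : w n (k + 1) - u0 = (w n k - u0) - β • gradient (Fn n) (w n k) := by
        rw [hw]; module
      rw [this]
      refine (norm_sub_le _ _).trans ?_
      rw [norm_smul, Real.norm_eq_abs, abs_of_pos hβ]
      have := hρb n (w n k)
      push_cast
      nlinarith [hρ n]
  intro k
  -- decomposition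
  have decomp : (∑ n, ξ n • wt n k) - ∑ n, q n • w n k
      = ∑ n, (ξ n • (wt n k - w n k) + (ξ n - q n) • (w n k - u0)) := by
    have h0 : ∑ n : Fin N, (ξ n - q n) • u0 = (0 : E) := by
      rw [← Finset.sum_smul]
      simp [Finset.sum_sub_distrib, hξsum, hqsum]
    have hterm : ∀ n : Fin N,
        ξ n • (wt n k - w n k) + (ξ n - q n) • (w n k - u0)
        = ξ n • wt n k - q n • w n k - (ξ n - q n) • u0 := by
      intro n; module
    rw [Finset.sum_congr rfl fun n _ => hterm n]
    rw [Finset.sum_sub_distrib, Finset.sum_sub_distrib, h0, sub_zero]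
  rw [decomp]
  calc ‖∑ n, (ξ n • (wt n k - w n k) + (ξ n - q n) • (w n k - u0))‖
      ≤ ∑ n, ‖ξ n • (wt n k - w n k) + (ξ n - q n) • (w n k - u0)‖ :=
        norm_sum_le _ _
    _ ≤ ∑ n, (ξ n * ((σ n / Real.sqrt (Dt n)) / L * ((β * L + 1) ^ k - 1)) +
          |ξ n - q n| * (β * k * ρ n)) := by
        apply Finset.sum_le_sum
        intro n _
        refine (norm_add_le _ _).trans ?_
        rw [norm_smul, norm_smul, Real.norm_eq_abs, Real.norm_eq_abs,
          abs_of_nonneg (hξ n)]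
        exact add_le_add (mul_le_mul_of_nonneg_left (key n k) (hξ n))
          (mul_le_mul_of_nonneg_left (drift n k) (abs_nonneg _))
    _ = (1 / L) * (∑ n, ξ n * (σ n / Real.sqrt (Dt n))) * ((β * L + 1) ^ k - 1) +
        β * k * ∑ n, |ξ n - q n| * ρ n := by
        rw [Finset.sum_add_distrib]
        congr 1
        · rw [Finset.mul_sum, Finset.sum_mul]
          apply Finset.sum_congr rfl; intro n _; ring
        · rw [Finset.mul_sum]
          apply Finset.sum_congr rfl; intro n _; ring
end

section
/- Let E be a real inner product space, β > 0, L > 0, δ ≥ 0, and let n range over a finite index set of size N with weights ξ_n ≥ 0, Σ_n ξ_n = 1. For each n let σ_n ≥ 0, D̃_n > 0, ρ_n ≥ 0, and let F, F_n, F̃_n : E → ℝ be differentiable with ∇F_n Lipschitz with constant L, ‖∇F̃_n(x) − ∇F_n(x)‖ ≤ σ_n / √(D̃_n) for all x, ‖∇F_n(x) − ∇F(x)‖ ≤ δ for all x, and ‖∇F_n(x)‖ ≤ ρ_n for all x. Let q_n ≥ 0 with Σ_n q_n = 1. Starting from a common point u_0, define w̃_n^{k+1} = w̃_n^k − β ∇F̃_n(w̃_n^k)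 with w̃_n^0 = u_0, and v^{k+1} = v^k − β ∇F(v^k) with v^0 = u_0. Then for every k ≥ 0, ‖Σ_n ξ_n w̃_n^k − v^k‖ ≤ (1/L) (δ + Σ_n ξ_n σ_n / √(D̃_n)) ((β L + 1)^k − 1) + β k (δ + Σ_n |ξ_n − q_n| ρ_n). (This is inequality (64) in Appendix D of the paper, obtained by combining the two parts of Lemma 4 via the triangle inequality.) -/
open Finset

/-- Inequality (64) in Appendix D: divergence between the ξ-weighted average of mini-batch
trajectories and the centralized gradient-descent trajectory. -/
theorem aggregated_vs_centralized_divergence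
    {E : Type*} [NormedAddCommGroup E] [InnerProductSpace ℝ E] [CompleteSpace E]
    (β L δ : ℝ) (hβ : 0 < β) (hL : 0 < L) (hδ : 0 ≤ δ)
    (N : ℕ) (ξ q : Fin N → ℝ)
    (hξ : ∀ n, 0 ≤ ξ n) (hξsum : ∑ n, ξ n = 1)
    (hq : ∀ n, 0 ≤ q n) (hqsum : ∑ n, q n = 1)
    (σ Dt ρ : Fin N → ℝ)
    (hσ : ∀ n, 0 ≤ σ n) (hD : ∀ n, 0 < Dt n) (hρ : ∀ n, 0 ≤ ρ n)
    (F : E → ℝ) (Fn Ftn : Fin N → E → ℝ)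
    (hF : Differentiable ℝ F)
    (hFn : ∀ n, Differentiable ℝ (Fn n)) (hFtn : ∀ n, Differentiable ℝ (Ftn n))
    (hLip : ∀ n x y, ‖gradient (Fn n) x - gradient (Fn n) y‖ ≤ L * ‖x - y‖)
    (hσb : ∀ n x, ‖gradient (Ftn n) x - gradient (Fn n) x‖ ≤ σ n / Real.sqrt (Dt n))
    (hδb : ∀ n x, ‖gradient (Fn n) x - gradient F x‖ ≤ δ)
    (hρb : ∀ n x, ‖gradient (Fn n) x‖ ≤ ρ n)
    (u0 : E) (wt : Fin N → ℕ → E) (v : ℕ → E)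
    (hwt0 : ∀ n, wt n 0 = u0) (hv0 : v 0 = u0)
    (hwt : ∀ n k, wt n (k + 1) = wt n k - β • gradient (Ftn n) (wt n k))
    (hv : ∀ k, v (k + 1) = v k - β • gradient F (v k)) :
    ∀ k : ℕ, ‖(∑ n, ξ n • wt n k) - v k‖ ≤
      (1 / L) * (δ + ∑ n, ξ n * (σ n / Real.sqrt (Dt n))) * ((β * L + 1) ^ k - 1) +
        β * k * (δ + ∑ n, |ξ n - q n| * ρ n) := by
  set s : Fin N → ℝ := fun n => σ n / Real.sqrt (Dt n) with hsdef
  have hs0 : ∀ n, 0 ≤ s n := fun n => div_nonneg (hσ n) (Real.sqrt_nonneg _)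
  have hP1 : ∀ k : ℕ, (1 : ℝ) ≤ (β * L + 1) ^ k := fun k =>
    one_le_pow₀ (by nlinarith)
  have key : ∀ n k, ‖wt n k - v k‖ ≤ (1 / L) * (δ + s n) * ((β * L + 1) ^ k - 1) := by
    intro n k
    induction k with
    | zero => simp [hwt0, hv0]
    | succ k ih =>
      have h1 : wt n (k + 1) - v (k + 1) =
          (wt n k - v k) - β • ((gradient (Ftn n) (wt n k) - gradient (Fn n) (wt n k))
            + (gradient (Fn n) (wt n k) - gradient (Fn n) (v k))
            + (gradient (Fn n) (v k) - gradient F (v k))) := by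
        rw [hwt, hv]
        simp only [smul_add, smul_sub]
        abel
      have h2 : ‖wt n (k + 1) - v (k + 1)‖ ≤
          ‖wt n k - v k‖ + β * (s n + L * ‖wt n k - v k‖ + δ) := by
        rw [h1]
        have := norm_sub_le (wt n k - v k)
          (β • ((gradient (Ftn n) (wt n k) - gradient (Fn n) (wt n k))
            + (gradient (Fn n) (wt n k) - gradient (Fn n) (v k))
            + (gradient (Fn n) (v k) - gradient F (v k))))
        refine this.trans ?_
        rw [norm_smul, Real.norm_eq_abs, abs_of_pos hβ]
        have ht : ‖(gradient (Ftn n) (wt n k) - gradient (Fn n) (wt n k))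
            + (gradient (Fn n) (wt n k) - gradient (Fn n) (v k))
            + (gradient (Fn n) (v k) - gradient F (v k))‖ ≤
            s n + L * ‖wt n k - v k‖ + δ := by
          refine (norm_add_le _ _).trans ?_
          have := norm_add_le (gradient (Ftn n) (wt n k) - gradient (Fn n) (wt n k))
            (gradient (Fn n) (wt n k) - gradient (Fn n) (v k))
          have h3 := hσb n (wt n k)
          have h4 := hLip n (wt n k) (v k)
          have h5 := hδb n (v k)
          nlinarith
        nlinarith [norm_nonneg (wt n k - v k)]
      have hCL : (1 / L) * (δ + s n) * L = δ + s n := by field_simp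
      have hP := hP1 k
      have hd0 : (0 : ℝ) ≤ ‖wt n k - v k‖ := norm_nonneg _
      have hds : 0 ≤ δ + s n := by nlinarith [hs0 n]
      refine h2.trans ?_
      have : (β * L + 1) ^ (k + 1) = (β * L + 1) * (β * L + 1) ^ k := by ring
      rw [this]
      nlinarith [mul_le_mul_of_nonneg_left ih (by positivity : (0:ℝ) ≤ β * L),
        mul_nonneg (mul_nonneg hβ.le hL.le) hd0]
  intro k
  have hT0 : (0 : ℝ) ≤ (β * L + 1) ^ k - 1 := by linarith [hP1 k]
  have hrw : (∑ n, ξ n • wt n k) - v k = ∑ n, ξ n • (wt n k - v k) := by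
    simp only [smul_sub]
    rw [Finset.sum_sub_distrib, ← Finset.sum_smul, hξsum, one_smul]
  have hmain : ‖(∑ n, ξ n • wt n k) - v k‖ ≤
      (1 / L) * (δ + ∑ n, ξ n * s n) * ((β * L + 1) ^ k - 1) := by
    rw [hrw]
    refine (norm_sum_le _ _).trans ?_
    have hstep : ∀ n ∈ Finset.univ, ‖ξ n • (wt n k - v k)‖ ≤
        ξ n * ((1 / L) * (δ + s n) * ((β * L + 1) ^ k - 1)) := by
      intro n _
      rw [norm_smul, Real.norm_eq_abs, abs_of_nonneg (hξ n)]
      exact mul_le_mul_of_nonneg_left (key n k) (hξ n)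
    refine (Finset.sum_le_sum hstep).trans ?_
    have hsum : ∑ n, ξ n * ((1 / L) * (δ + s n) * ((β * L + 1) ^ k - 1)) =
        (1 / L) * (δ + ∑ n, ξ n * s n) * ((β * L + 1) ^ k - 1) := by
      calc ∑ n, ξ n * ((1 / L) * (δ + s n) * ((β * L + 1) ^ k - 1))
          = ∑ n, ((1 / L * ((β * L + 1) ^ k - 1) * δ) * ξ n
              + (1 / L * ((β * L + 1) ^ k - 1)) * (ξ n * s n)) :=
            Finset.sum_congr rfl fun n _ => by ring
        _ = (1 / L * ((β * L + 1) ^ k - 1) * δ) * ∑ n, ξ n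
              + (1 / L * ((β * L + 1) ^ k - 1)) * ∑ n, ξ n * s n := by
            rw [Finset.sum_add_distrib, ← Finset.mul_sum, ← Finset.mul_sum]
        _ = (1 / L) * (δ + ∑ n, ξ n * s n) * ((β * L + 1) ^ k - 1) := by
            rw [hξsum]; ring
    exact le_of_eq hsum
  have hnn : 0 ≤ β * k * (δ + ∑ n, |ξ n - q n| * ρ n) := by
    apply mul_nonneg (mul_nonneg hβ.le (Nat.cast_nonneg k))
    have : 0 ≤ ∑ n, |ξ n - q n| * ρ n :=
      Finset.sum_nonneg fun n _ => mul_nonneg (abs_nonneg _) (hρ n)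
    linarith
  linarith
end

section
/- Let E be a real inner product space, β > 0, and let n range over {1,…,N} with weights ξ_n ≥ 0, Σ_n ξ_n = 1. Let F, F_n : E → ℝ be differentiable with ∇F_n Lipschitz with constant L_n > 0 and ∇F(x) = Σ_n ξ_n ∇F_n(x) for all x ∈ E. Fix a point w̃ ∈ E and define local trajectories w_n^0 = w̃, w_n^{j+1} = w_n^j − β ∇F_n(w_n^j). Then for every k ≥ 0, ⟨∇F(w̃), − Σ_n ξ_n ∇F_n(w_n^k)⟩ ≤ −(1/2) ‖∇F(w̃)‖² + (N/2) Σ_n ξ_n² L_n² β² k Σ_{j=0}^{k−1} ‖∇F_n(w_n^j)‖². (This is the deterministic form of the key inner-product bound (69) in Appendix E of the paper, used in the proof of the non-convex convergence theorem.) -/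
open Finset RealInnerProductSpace

lemma norm_sum_sq_le_card {E : Type*} [NormedAddCommGroup E] (s : Finset ℕ)
    (v : ℕ → E) : ‖∑ i ∈ s, v i‖ ^ 2 ≤ (s.card : ℝ) * ∑ i ∈ s, ‖v i‖ ^ 2 := by
  calc ‖∑ i ∈ s, v i‖ ^ 2 ≤ (∑ i ∈ s, ‖v i‖) ^ 2 := by
        apply pow_le_pow_left₀ (norm_nonneg _) (norm_sum_le _ _)
    _ ≤ (s.card : ℝ) * ∑ i ∈ s, ‖v i‖ ^ 2 := by
        exact_mod_cast sq_sum_le_card_mul_sum_sq (s := s) (f := fun i => ‖v i‖)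

lemma norm_sum_sq_le_card' {E : Type*} [NormedAddCommGroup E] {N : ℕ}
    (v : Fin N → E) : ‖∑ i, v i‖ ^ 2 ≤ (N : ℝ) * ∑ i, ‖v i‖ ^ 2 := by
  calc ‖∑ i, v i‖ ^ 2 ≤ (∑ i, ‖v i‖) ^ 2 := by
        apply pow_le_pow_left₀ (norm_nonneg _) (norm_sum_le _ _)
    _ ≤ (N : ℝ) * ∑ i, ‖v i‖ ^ 2 := by
        have := sq_sum_le_card_mul_sum_sq (s := (Finset.univ : Finset (Fin N)))
          (f := fun i => ‖v i‖)
        simpa using this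

/-- Deterministic form of the key inner-product bound (69) in Appendix E. -/
theorem inner_product_descent_bound
    {E : Type*} [NormedAddCommGroup E] [InnerProductSpace ℝ E] [CompleteSpace E]
    (β : ℝ) (hβ : 0 < β)
    (N : ℕ) (ξ : Fin N → ℝ) (hξ : ∀ n, 0 ≤ ξ n) (hξsum : ∑ n, ξ n = 1)
    (L : Fin N → ℝ) (hL : ∀ n, 0 < L n)
    (F : E → ℝ) (Fn : Fin N → E → ℝ)
    (hF : Differentiable ℝ F) (hFn : ∀ n, Differentiable ℝ (Fn n))
    (hLip : ∀ n x y, ‖gradient (Fn n) x - gradient (Fn n) y‖ ≤ L n * ‖x - y‖)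
    (hgrad : ∀ x, gradient F x = ∑ n, ξ n • gradient (Fn n) x)
    (wtil : E) (w : Fin N → ℕ → E)
    (hw0 : ∀ n, w n 0 = wtil)
    (hw : ∀ n j, w n (j + 1) = w n j - β • gradient (Fn n) (w n j)) :
    ∀ k : ℕ,
      ⟪gradient F wtil, -∑ n, ξ n • gradient (Fn n) (w n k)⟫ ≤
        -(1 / 2) * ‖gradient F wtil‖ ^ 2 +
          (N / 2) * ∑ n, (ξ n) ^ 2 * (L n) ^ 2 * β ^ 2 * (k : ℝ) *
            ∑ j ∈ Finset.range k, ‖gradient (Fn n) (w n j)‖ ^ 2 := by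
  intro k
  -- trajectory displacement
  have hdisp : ∀ n, wtil - w n k = β • ∑ j ∈ Finset.range k, gradient (Fn n) (w n j) := by
    intro n
    induction k with
    | zero => simp [hw0 n]
    | succ m ih =>
        rw [Finset.sum_range_succ, smul_add, ← ih, hw n m]
        abel
  set a := gradient F wtil with ha
  set b := ∑ n, ξ n • gradient (Fn n) (w n k) with hb
  -- per-device gradient drift bound
  have key : ∀ n, ‖gradient (Fn n) wtil - gradient (Fn n) (w n k)‖ ^ 2 ≤
      (L n) ^ 2 * β ^ 2 * (k : ℝ) * ∑ j ∈ Finset.range k, ‖gradient (Fn n) (w n j)‖ ^ 2 := by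
    intro n
    have h1 : ‖gradient (Fn n) wtil - gradient (Fn n) (w n k)‖ ≤ L n * ‖wtil - w n k‖ :=
      hLip n _ _
    have h2 : ‖wtil - w n k‖ = β * ‖∑ j ∈ Finset.range k, gradient (Fn n) (w n j)‖ := by
      rw [hdisp n, norm_smul, Real.norm_eq_abs, abs_of_pos hβ]
    have h3 : ‖∑ j ∈ Finset.range k, gradient (Fn n) (w n j)‖ ^ 2 ≤
        (k : ℝ) * ∑ j ∈ Finset.range k, ‖gradient (Fn n) (w n j)‖ ^ 2 := by
      simpa using norm_sum_sq_le_card (Finset.range k) (fun j => gradient (Fn n) (w n j))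
    have h4 : ‖gradient (Fn n) wtil - gradient (Fn n) (w n k)‖ ^ 2 ≤
        (L n * ‖wtil - w n k‖) ^ 2 :=
      pow_le_pow_left₀ (norm_nonneg _) h1 2
    calc ‖gradient (Fn n) wtil - gradient (Fn n) (w n k)‖ ^ 2
        ≤ (L n * ‖wtil - w n k‖) ^ 2 := h4
      _ = (L n) ^ 2 * β ^ 2 * ‖∑ j ∈ Finset.range k, gradient (Fn n) (w n j)‖ ^ 2 := by
          rw [h2]; ring
      _ ≤ (L n) ^ 2 * β ^ 2 * ((k : ℝ) * ∑ j ∈ Finset.range k, ‖gradient (Fn n) (w n j)‖ ^ 2) := by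
          apply mul_le_mul_of_nonneg_left h3; positivity
      _ = (L n) ^ 2 * β ^ 2 * (k : ℝ) * ∑ j ∈ Finset.range k, ‖gradient (Fn n) (w n j)‖ ^ 2 := by
          ring
  -- bound ‖a - b‖²
  have hab : a - b = ∑ n, ξ n • (gradient (Fn n) wtil - gradient (Fn n) (w n k)) := by
    rw [ha, hgrad wtil, hb, ← Finset.sum_sub_distrib]
    simp [smul_sub]
  have habsq : ‖a - b‖ ^ 2 ≤
      (N : ℝ) * ∑ n, (ξ n) ^ 2 * (L n) ^ 2 * β ^ 2 * (k : ℝ) *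
        ∑ j ∈ Finset.range k, ‖gradient (Fn n) (w n j)‖ ^ 2 := by
    rw [hab]
    refine le_trans (norm_sum_sq_le_card' _) ?_
    apply mul_le_mul_of_nonneg_left _ (Nat.cast_nonneg N)
    apply Finset.sum_le_sum
    intro n _
    rw [norm_smul, mul_pow, Real.norm_eq_abs, sq_abs]
    calc (ξ n) ^ 2 * ‖gradient (Fn n) wtil - gradient (Fn n) (w n k)‖ ^ 2
        ≤ (ξ n) ^ 2 * ((L n) ^ 2 * β ^ 2 * (k : ℝ) *
            ∑ j ∈ Finset.range k, ‖gradient (Fn n) (w n j)‖ ^ 2) :=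
          mul_le_mul_of_nonneg_left (key n) (sq_nonneg _)
      _ = (ξ n) ^ 2 * (L n) ^ 2 * β ^ 2 * (k : ℝ) *
            ∑ j ∈ Finset.range k, ‖gradient (Fn n) (w n j)‖ ^ 2 := by ring
  -- inner product identity
  have hid : ‖a - b‖ ^ 2 = ‖a‖ ^ 2 - 2 * ⟪a, b⟫ + ‖b‖ ^ 2 := norm_sub_sq_real a b
  have hbn : (0 : ℝ) ≤ ‖b‖ ^ 2 := sq_nonneg _
  rw [inner_neg_right]
  nlinarith [habsq, hid, hbn]
end

section
/- Let E be a real inner product space, β > 0, K ≥ 1, and let n range over {1,…,N} with weights ξ_n ≥ 0, Σ_n ξ_n = 1. Let F, F_n : E → ℝ be differentiable with ∇F_n Lipschitz with constant L_n > 0, ∇F(x) = Σ_n ξ_n ∇F_n(x) for all x, and ∇F Lipschitz with constant L > 0. Given a global model w̃^t, define local trajectories w̃_n^{0,t} = w̃^t, w̃_n^{k+1,t} = w̃_n^{k,t} − β ∇F_n(w̃_n^{k,t}), and the global update w̃^{t+1} = w̃^t − β Σ_n ξ_n Σ_{k=0}^{K−1} ∇F_n(w̃_n^{k,t}). Then F(w̃^{t+1})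 − F(w̃^t) ≤ (L β² N K / 2) Σ_n Σ_{k=0}^{K−1} ξ_n² ‖∇F_n(w̃_n^{k,t})‖² − (K β / 2) ‖∇F(w̃^t)‖² + (N β³ / 2) Σ_n Σ_{k=0}^{K−1} ξ_n² L_n² k Σ_{j=0}^{k−1} ‖∇F_n(w̃_n^{j,t})‖². (This is the deterministic per-round descent inequality (70) in Appendix E of the paper.) -/
/-!
Apply the descent lemma of the `L`-smooth global loss at `w̃ᵗ` along the aggregated step
`-β ∑ₖ bₖ`, where `bₖ = ∑ₙ ξₙ ∇Fₙ(w̃ₙᵏ)`. Since `∇F(w̃ᵗ) = b₀`, polarisation gives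
`-⟪∇F(w̃ᵗ), bₖ⟫ ≤ (‖b₀ - bₖ‖² - ‖∇F(w̃ᵗ)‖²) / 2`, and the quadratic term and the drifts
`‖b₀ - bₖ‖²` are bounded by Cauchy–Schwarz together with the `Lₙ`-Lipschitz continuity of `∇Fₙ`
along the local trajectories, `w̃ₙ⁰ - w̃ₙᵏ = β ∑_{j<k} ∇Fₙ(w̃ₙʲ)`.
-/

open Finset

lemma norm_sum_sq_le_card_mul_sum_norm_sq {ι E : Type*} [SeminormedAddCommGroup E]
    (s : Finset ι) (v : ι → E) :
    ‖∑ i ∈ s, v i‖ ^ 2 ≤ #s * ∑ i ∈ s, ‖v i‖ ^ 2 :=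
  (pow_le_pow_left₀ (norm_nonneg _) (norm_sum_le s v) 2).trans (sq_sum_le_card_mul_sum_sq ..)

lemma norm_sum_smul_sq_le {ι E : Type*} [SeminormedAddCommGroup E] [NormedSpace ℝ E]
    (s : Finset ι) (c : ι → ℝ) (v : ι → E) :
    ‖∑ i ∈ s, c i • v i‖ ^ 2 ≤ #s * ∑ i ∈ s, c i ^ 2 * ‖v i‖ ^ 2 := by
  simpa only [norm_smul, mul_pow, Real.norm_eq_abs, sq_abs] using
    norm_sum_sq_le_card_mul_sum_norm_sq s fun i => c i • v i

lemma real_inner_neg_le_half_norm_sub_sq {E : Type*} [SeminormedAddCommGroup E]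
    [InnerProductSpace ℝ E] (a b : E) :
    -inner ℝ a b ≤ (‖a - b‖ ^ 2 - ‖a‖ ^ 2) / 2 := by
  nlinarith [norm_sub_sq_real a b, sq_nonneg ‖b‖]

lemma sub_eq_smul_sum_of_eq_sub_smul {R E : Type*} [Ring R] [AddCommGroup E] [Module R E]
    (β : R) (w d : ℕ → E) (hw : ∀ k, w (k + 1) = w k - β • d k) (k : ℕ) :
    w 0 - w k = β • ∑ j ∈ range k, d j := by
  induction k with
  | zero => simp
  | succ k ih => rw [sum_range_succ, smul_add, ← ih, hw k]; abel

lemma norm_sub_sq_le_of_eq_sub_smul {E : Type*} [SeminormedAddCommGroup E] [NormedSpace ℝ E]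
    (g : E → E) (C β : ℝ) (hg : ∀ x y, ‖g x - g y‖ ≤ C * ‖x - y‖)
    (w : ℕ → E) (hw : ∀ k, w (k + 1) = w k - β • g (w k)) (k : ℕ) :
    ‖g (w 0) - g (w k)‖ ^ 2 ≤ C ^ 2 * β ^ 2 * k * ∑ j ∈ range k, ‖g (w j)‖ ^ 2 := by
  have htraj := sub_eq_smul_sum_of_eq_sub_smul β w (fun j => g (w j)) hw k
  calc ‖g (w 0) - g (w k)‖ ^ 2 ≤ (C * ‖w 0 - w k‖) ^ 2 :=
        pow_le_pow_left₀ (norm_nonneg _) (hg _ _) 2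
    _ = C ^ 2 * β ^ 2 * ‖∑ j ∈ range k, g (w j)‖ ^ 2 := by
        rw [htraj, norm_smul, Real.norm_eq_abs, mul_pow, mul_pow, sq_abs]; ring
    _ ≤ C ^ 2 * β ^ 2 * (k * ∑ j ∈ range k, ‖g (w j)‖ ^ 2) := by
        gcongr
        simpa using norm_sum_sq_le_card_mul_sum_norm_sq (range k) fun j => g (w j)
    _ = C ^ 2 * β ^ 2 * k * ∑ j ∈ range k, ‖g (w j)‖ ^ 2 := by ring

lemma norm_sum_sum_smul_sq_le {ι κ E : Type*} [SeminormedAddCommGroup E] [NormedSpace ℝ E]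
    (s : Finset ι) (t : Finset κ) (c : ι → ℝ) (v : ι → κ → E) :
    ‖∑ k ∈ t, ∑ n ∈ s, c n • v n k‖ ^ 2 ≤ #s * #t * ∑ n ∈ s, ∑ k ∈ t, c n ^ 2 * ‖v n k‖ ^ 2 := by
  convert norm_sum_smul_sq_le (s ×ˢ t) (fun p => c p.1) (fun p => v p.1 p.2) using 2
  · rw [sum_product, sum_comm]
  · simp
  · rw [sum_product]

lemma norm_sum_smul_sub_sq_le_of_eq_sub_smul {ι E : Type*} [SeminormedAddCommGroup E]
    [NormedSpace ℝ E] (s : Finset ι) (ξ C : ι → ℝ) (g : ι → E → E) (β : ℝ)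
    (hg : ∀ n x y, ‖g n x - g n y‖ ≤ C n * ‖x - y‖) (w : ι → ℕ → E)
    (hw : ∀ n k, w n (k + 1) = w n k - β • g n (w n k)) (k : ℕ) :
    ‖∑ n ∈ s, ξ n • g n (w n 0) - ∑ n ∈ s, ξ n • g n (w n k)‖ ^ 2 ≤
      #s * β ^ 2 * ∑ n ∈ s, ξ n ^ 2 * C n ^ 2 * k * ∑ j ∈ range k, ‖g n (w n j)‖ ^ 2 := by
  rw [← sum_sub_distrib, mul_assoc, mul_sum]
  simp only [← smul_sub]
  refine (norm_sum_smul_sq_le _ _ _).trans (mul_le_mul_of_nonneg_left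
    (sum_le_sum fun n _ => ?_) (Nat.cast_nonneg _))
  calc ξ n ^ 2 * ‖g n (w n 0) - g n (w n k)‖ ^ 2
      ≤ ξ n ^ 2 * (C n ^ 2 * β ^ 2 * k * ∑ j ∈ range k, ‖g n (w n j)‖ ^ 2) :=
        mul_le_mul_of_nonneg_left
          (norm_sub_sq_le_of_eq_sub_smul _ _ β (hg n) (w n) (hw n) k) (sq_nonneg _)
    _ = β ^ 2 * (ξ n ^ 2 * C n ^ 2 * k * ∑ j ∈ range k, ‖g n (w n j)‖ ^ 2) := by ring

section Smooth

variable {E : Type*} [NormedAddCommGroup E] [InnerProductSpace ℝ E] [CompleteSpace E]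
  {F : E → ℝ} {L : ℝ}

/-- The descent lemma. -/
lemma apply_add_le_of_norm_gradient_sub_le (hF : Differentiable ℝ F)
    (hLip : ∀ x y, ‖gradient F x - gradient F y‖ ≤ L * ‖x - y‖) (x v : E) :
    F (x + v) ≤ F x + inner ℝ (gradient F x) v + L / 2 * ‖v‖ ^ 2 := by
  set φ : ℝ → ℝ := fun t => F (x + t • v) - t * inner ℝ (gradient F x) v - L / 2 * t ^ 2 * ‖v‖ ^ 2
  set φ' : ℝ → ℝ := fun t =>
    inner ℝ (gradient F (x + t • v)) v - inner ℝ (gradient F x) v - L * t * ‖v‖ ^ 2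
  have hφ : ∀ t, HasDerivAt φ (φ' t) t := by
    intro t
    have hline : HasDerivAt (fun t : ℝ => x + t • v) v t := by
      simpa using ((hasDerivAt_id t).smul_const v).const_add x
    have hFline := (hF (x + t • v)).hasGradientAt.hasFDerivAt.comp_hasDerivAt t hline
    simp only [Function.comp_def, InnerProductSpace.toDual_apply_apply] at hFline
    have hφt := (hFline.sub ((hasDerivAt_id t).mul_const (inner ℝ (gradient F x) v))).sub
      (((hasDerivAt_pow 2 t).const_mul (L / 2)).mul_const (‖v‖ ^ 2))
    exact hφt.congr_deriv (by simp only [φ']; ring)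
  have hφ'_nonpos : ∀ t ∈ interior (Set.Ici (0 : ℝ)), φ' t ≤ 0 := by
    intro t ht
    rw [interior_Ici, Set.mem_Ioi] at ht
    have hnorm : ‖gradient F (x + t • v) - gradient F x‖ ≤ L * (t * ‖v‖) := by
      simpa [norm_smul, abs_of_pos ht] using hLip (x + t • v) x
    have hinner := real_inner_le_norm (gradient F (x + t • v) - gradient F x) v
    rw [inner_sub_left] at hinner
    nlinarith [mul_le_mul_of_nonneg_right hnorm (norm_nonneg v)]
  have hanti : AntitoneOn φ (Set.Ici 0) :=
    antitoneOn_of_hasDerivWithinAt_nonpos (convex_Ici 0)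
      (HasDerivAt.continuousOn fun t _ => hφ t) (fun t _ => (hφ t).hasDerivWithinAt) hφ'_nonpos
  have h10 := hanti (Set.mem_Ici.2 le_rfl) (Set.mem_Ici.2 zero_le_one) zero_le_one
  simp only [φ, one_smul, zero_smul, add_zero] at h10
  linarith

lemma apply_sub_smul_sum_sub_le {ι : Type*} (hF : Differentiable ℝ F)
    (hLip : ∀ x y, ‖gradient F x - gradient F y‖ ≤ L * ‖x - y‖)
    {β : ℝ} (hβ : 0 ≤ β) (x : E) (s : Finset ι) (b : ι → E) :
    F (x - β • ∑ k ∈ s, b k) - F x ≤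
      L / 2 * β ^ 2 * ‖∑ k ∈ s, b k‖ ^ 2 - #s * β / 2 * ‖gradient F x‖ ^ 2
        + β / 2 * ∑ k ∈ s, ‖gradient F x - b k‖ ^ 2 := by
  have hdesc := apply_add_le_of_norm_gradient_sub_le hF hLip x (-(β • ∑ k ∈ s, b k))
  have hpolar : -inner ℝ (gradient F x) (∑ k ∈ s, b k) ≤
      ∑ k ∈ s, (‖gradient F x - b k‖ ^ 2 - ‖gradient F x‖ ^ 2) / 2 := by
    rw [inner_sum, ← sum_neg_distrib]
    exact sum_le_sum fun k _ => real_inner_neg_le_half_norm_sub_sq _ _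
  rw [← sub_eq_add_neg, inner_neg_right, inner_smul_right, norm_neg, norm_smul,
    Real.norm_eq_abs, mul_pow, sq_abs] at hdesc
  rw [← sum_div, sum_sub_distrib, sum_const, nsmul_eq_mul] at hpolar
  linarith [mul_le_mul_of_nonneg_left hpolar hβ]

end Smooth

theorem per_round_descent_inequality_general
    {E : Type*} [NormedAddCommGroup E] [InnerProductSpace ℝ E] [CompleteSpace E]
    (β : ℝ) (hβ : 0 < β) (K : ℕ)
    (N : ℕ) (ξ : Fin N → ℝ)
    (Ln : Fin N → ℝ) (L : ℝ) (hL : 0 < L)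
    (F : E → ℝ) (Fn : Fin N → E → ℝ)
    (hF : Differentiable ℝ F)
    (hLipn : ∀ n x y, ‖gradient (Fn n) x - gradient (Fn n) y‖ ≤ Ln n * ‖x - y‖)
    (hgrad : ∀ x, gradient F x = ∑ n, ξ n • gradient (Fn n) x)
    (hLip : ∀ x y, ‖gradient F x - gradient F y‖ ≤ L * ‖x - y‖)
    (wtil wnext : E) (w : Fin N → ℕ → E)
    (hw0 : ∀ n, w n 0 = wtil)
    (hw : ∀ n k, w n (k + 1) = w n k - β • gradient (Fn n) (w n k))
    (hnext : wnext = wtil - β • ∑ n, ξ n • ∑ k ∈ Finset.range K, gradient (Fn n) (w n k)) :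
    F wnext - F wtil ≤
      (L * β ^ 2 * N * K / 2) *
          (∑ n, ∑ k ∈ Finset.range K, (ξ n) ^ 2 * ‖gradient (Fn n) (w n k)‖ ^ 2)
        - (K * β / 2) * ‖gradient F wtil‖ ^ 2
        + (N * β ^ 3 / 2) *
          (∑ n, ∑ k ∈ Finset.range K, (ξ n) ^ 2 * (Ln n) ^ 2 * (k : ℝ) *
            ∑ j ∈ Finset.range k, ‖gradient (Fn n) (w n j)‖ ^ 2) := by
  set g : Fin N → ℕ → E := fun n k => gradient (Fn n) (w n k)
  have hsum : ∑ n, ξ n • ∑ k ∈ range K, g n k = ∑ k ∈ range K, ∑ n, ξ n • g n k := by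
    simp only [smul_sum]; exact sum_comm
  have hround := apply_sub_smul_sum_sub_le hF hLip hβ.le wtil (range K) fun k => ∑ n, ξ n • g n k
  rw [card_range] at hround
  rw [hnext, hsum]
  have hquad := norm_sum_sum_smul_sq_le univ (range K) ξ g
  rw [card_univ, Fintype.card_fin, card_range] at hquad
  have hdrift : β / 2 * ∑ k ∈ range K, ‖gradient F wtil - ∑ n, ξ n • g n k‖ ^ 2 ≤
      N * β ^ 3 / 2 * ∑ n, ∑ k ∈ range K, ξ n ^ 2 * Ln n ^ 2 * k * ∑ j ∈ range k, ‖g n j‖ ^ 2 := by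
    rw [sum_comm, mul_sum, mul_sum]
    refine sum_le_sum fun k _ => ?_
    have hk := norm_sum_smul_sub_sq_le_of_eq_sub_smul univ ξ Ln (fun n => gradient (Fn n)) β
      hLipn w hw k
    simp only [hw0, ← hgrad, card_univ, Fintype.card_fin] at hk
    linarith [mul_le_mul_of_nonneg_left hk hβ.le]
  linarith [mul_le_mul_of_nonneg_left hquad (by positivity : 0 ≤ L / 2 * β ^ 2)]

/-- Deterministic per-round descent inequality (70) in Appendix E. -/
theorem per_round_descent_inequality
    {E : Type*} [NormedAddCommGroup E] [InnerProductSpace ℝ E] [CompleteSpace E]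
    (β : ℝ) (hβ : 0 < β) (K : ℕ) (hK : 1 ≤ K)
    (N : ℕ) (ξ : Fin N → ℝ) (hξ : ∀ n, 0 ≤ ξ n) (hξsum : ∑ n, ξ n = 1)
    (Ln : Fin N → ℝ) (hLn : ∀ n, 0 < Ln n) (L : ℝ) (hL : 0 < L)
    (F : E → ℝ) (Fn : Fin N → E → ℝ)
    (hF : Differentiable ℝ F) (hFn : ∀ n, Differentiable ℝ (Fn n))
    (hLipn : ∀ n x y, ‖gradient (Fn n) x - gradient (Fn n) y‖ ≤ Ln n * ‖x - y‖)
    (hgrad : ∀ x, gradient F x = ∑ n, ξ n • gradient (Fn n) x)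
    (hLip : ∀ x y, ‖gradient F x - gradient F y‖ ≤ L * ‖x - y‖)
    (wtil wnext : E) (w : Fin N → ℕ → E)
    (hw0 : ∀ n, w n 0 = wtil)
    (hw : ∀ n k, w n (k + 1) = w n k - β • gradient (Fn n) (w n k))
    (hnext : wnext = wtil - β • ∑ n, ξ n • ∑ k ∈ Finset.range K, gradient (Fn n) (w n k)) :
    F wnext - F wtil ≤
      (L * β ^ 2 * N * K / 2) *
          (∑ n, ∑ k ∈ Finset.range K, (ξ n) ^ 2 * ‖gradient (Fn n) (w n k)‖ ^ 2)
        - (K * β / 2) * ‖gradient F wtil‖ ^ 2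
        + (N * β ^ 3 / 2) *
          (∑ n, ∑ k ∈ Finset.range K, (ξ n) ^ 2 * (Ln n) ^ 2 * (k : ℝ) *
            ∑ j ∈ Finset.range k, ‖gradient (Fn n) (w n j)‖ ^ 2) :=
  per_round_descent_inequality_general β hβ K N ξ Ln L hL F Fn hF hLipn hgrad hLip wtil wnext w hw0
    hw hnext
end

section
/- Let E be a real inner product space, β > 0, K ≥ 1, T ≥ 1, and let n range over {1,…,N} with weights ξ_n ≥ 0, Σ_n ξ_n = 1. Let F, F_n : E → ℝ be differentiable with ∇F_n Lipschitz with constant L_n > 0, ∇F(x) = Σ_n ξ_n ∇F_n(x) for all x, and ∇F Lipschitz with constant L > 0. Define, for t = 0,…,T−1, local trajectories w̃_n^{0,t} = w̃^t, w̃_n^{k+1,t} = w̃_n^{k,t} − β ∇F_n(w̃_n^{k,t}), and global updates w̃^{t+1} = w̃^t − β Σ_n ξ_n Σ_{k=0}^{K−1} ∇F_n(w̃_n^{k,t}). Then (1/T) Σ_{t=0}^{T−1} ‖∇F(w̃^t)‖² ≤ (2/(K β T)) (F(w̃^0) − F(w̃^T)) + (L β N / T) Σ_{t=0}^{T−1}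 Σ_{n=1}^{N} Σ_{k=0}^{K−1} ξ_n² ‖∇F_n(w̃_n^{k,t})‖² + (N β² / (K T)) Σ_{t=0}^{T−1} Σ_{n=1}^{N} Σ_{k=0}^{K−1} ξ_n² L_n² k Σ_{j=0}^{k−1} ‖∇F_n(w̃_n^{j,t})‖². (This is the deterministic form of Theorem 4 of the paper, the non-convex FL convergence bound for the DDSRA algorithm.) -/
/-!
Each communication round is analysed with the descent lemma for the `L`-smooth global loss `F`.
The global step is `β` times the sum over the `K` local epochs of
`d_k = ∑ n, ξ n • ∇F_n (w̃_n^{k,t})`, and polarization `⟪a, d⟫ ≥ (‖a‖² - ‖a - d‖²) / 2` turns the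
first-order term into `-(β K / 2) ‖∇F (w̃^t)‖²` plus the client drifts `‖∇F (w̃^t) - d_k‖²`.
Since `∇F = ∑ n, ξ n • ∇F_n`, a drift is controlled by the distances `‖w̃^t - w̃_n^{k,t}‖`, i.e. by
`β` times the sum of the first `k` local gradients, through the `L_n`-Lipschitz bounds; the
Cauchy–Schwarz estimate `‖∑_{i ∈ s} v_i‖² ≤ #s ∑_{i ∈ s} ‖v_i‖²` produces the factors `N`, `K`
and `k`. Summing over the rounds telescopes `F`.
-/

open Finset

section NormSums

variable {ι E : Type*} [SeminormedAddCommGroup E]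

theorem norm_sum_sq_le_card_mul (s : Finset ι) (v : ι → E) :
    ‖∑ i ∈ s, v i‖ ^ 2 ≤ #s * ∑ i ∈ s, ‖v i‖ ^ 2 :=
  (pow_le_pow_left₀ (norm_nonneg _) (norm_sum_le s v) 2).trans sq_sum_le_card_mul_sum_sq

theorem norm_sum_smul_sq_le_card_mul [NormedSpace ℝ E] (s : Finset ι) (c : ι → ℝ) (v : ι → E) :
    ‖∑ i ∈ s, c i • v i‖ ^ 2 ≤ #s * ∑ i ∈ s, c i ^ 2 * ‖v i‖ ^ 2 := by
  simpa only [norm_smul, Real.norm_eq_abs, mul_pow, sq_abs] using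
    norm_sum_sq_le_card_mul s fun i => c i • v i

end NormSums

section GradientSteps

variable {E : Type*} [NormedAddCommGroup E] [InnerProductSpace ℝ E]

theorem norm_sub_sq_le_of_forall_succ_eq_sub_smul {G : E → E} {c β : ℝ}
    (hG : ∀ x y, ‖G x - G y‖ ≤ c * ‖x - y‖) {u : ℕ → E}
    (hu : ∀ k, u (k + 1) = u k - β • G (u k)) (k : ℕ) :
    ‖G (u 0) - G (u k)‖ ^ 2 ≤ c ^ 2 * β ^ 2 * k * ∑ j ∈ range k, ‖G (u j)‖ ^ 2 := by
  have hdisp : u 0 - u k = β • ∑ j ∈ range k, G (u j) := by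
    rw [← sum_range_sub', smul_sum]
    exact sum_congr rfl fun j _ => by rw [hu, sub_sub_cancel]
  calc ‖G (u 0) - G (u k)‖ ^ 2 ≤ (c * ‖u 0 - u k‖) ^ 2 :=
        pow_le_pow_left₀ (norm_nonneg _) (hG _ _) 2
    _ = c ^ 2 * β ^ 2 * ‖∑ j ∈ range k, G (u j)‖ ^ 2 := by
        rw [hdisp, norm_smul, Real.norm_eq_abs, mul_pow, mul_pow, sq_abs, mul_assoc]
    _ ≤ c ^ 2 * β ^ 2 * k * ∑ j ∈ range k, ‖G (u j)‖ ^ 2 := by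
        rw [mul_assoc _ (k : ℝ)]
        gcongr
        simpa using norm_sum_sq_le_card_mul (range k) fun j => G (u j)

variable [CompleteSpace E]

theorem le_add_inner_add_half_mul_norm_sq_of_lipschitz_gradient {F : E → ℝ} {L : ℝ}
    (hF : Differentiable ℝ F) (hLip : ∀ x y, ‖gradient F x - gradient F y‖ ≤ L * ‖x - y‖)
    (x y : E) :
    F y ≤ F x + inner ℝ (gradient F x) (y - x) + L / 2 * ‖y - x‖ ^ 2 := by
  set v := y - x
  set g : ℝ → ℝ := fun s =>
    F (x + s • v) - s * inner ℝ (gradient F x) v - L / 2 * s ^ 2 * ‖v‖ ^ 2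
  have hg : ∀ s, HasDerivAt g (inner ℝ (gradient F (x + s • v)) v
      - inner ℝ (gradient F x) v - L * s * ‖v‖ ^ 2) s := by
    intro s
    have hline : HasDerivAt (fun s : ℝ => x + s • v) v s := by
      simpa using ((hasDerivAt_id s).smul_const v).const_add x
    have hFline := (hF (x + s • v)).hasGradientAt.hasFDerivAt.comp_hasDerivAt s hline
    refine ((hFline.sub ((hasDerivAt_id s).mul_const (inner ℝ (gradient F x) v))).sub
      (((hasDerivAt_pow 2 s).const_mul (L / 2)).mul_const (‖v‖ ^ 2))).congr_deriv ?_
    rw [InnerProductSpace.toDual_apply_apply]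
    push_cast
    ring
  -- `g' s = ⟪∇F (x + s • v) - ∇F x, v⟫ - L s ‖v‖² ≤ 0` by Cauchy–Schwarz and the Lipschitz bound.
  have hanti : AntitoneOn g (Set.Ici 0) := by
    refine antitoneOn_of_hasDerivWithinAt_nonpos (convex_Ici 0)
      (HasDerivAt.continuousOn fun s _ => hg s) (fun s _ => (hg s).hasDerivWithinAt) ?_
    intro s hs
    rw [interior_Ici] at hs
    have hgap : ‖gradient F (x + s • v) - gradient F x‖ ≤ L * (s * ‖v‖) := by
      simpa [norm_smul, abs_of_pos (Set.mem_Ioi.mp hs)] using hLip (x + s • v) x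
    have := real_inner_le_norm (gradient F (x + s • v) - gradient F x) v
    rw [inner_sub_left] at this
    nlinarith [mul_le_mul_of_nonneg_right hgap (norm_nonneg v)]
  have h01 : g 1 ≤ g 0 := hanti Set.self_mem_Ici (Set.mem_Ici.mpr zero_le_one) zero_le_one
  simp only [g, one_smul, zero_smul, add_zero, one_mul, one_pow, mul_one, zero_mul,
    zero_pow two_ne_zero, mul_zero, sub_zero, v, add_sub_cancel] at h01
  linarith

theorem card_mul_norm_sq_le_of_sub_smul_sum {ι : Type*} {F : E → ℝ} {L β : ℝ}
    (hF : Differentiable ℝ F) (hLip : ∀ x y, ‖gradient F x - gradient F y‖ ≤ L * ‖x - y‖)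
    (hβ : 0 ≤ β) (s : Finset ι) (d : ι → E) (x : E) :
    β * #s / 2 * ‖gradient F x‖ ^ 2 ≤ F x - F (x - β • ∑ i ∈ s, d i)
      + β / 2 * ∑ i ∈ s, ‖gradient F x - d i‖ ^ 2 + L / 2 * β ^ 2 * ‖∑ i ∈ s, d i‖ ^ 2 := by
  have hdesc := le_add_inner_add_half_mul_norm_sq_of_lipschitz_gradient hF hLip x
    (x - β • ∑ i ∈ s, d i)
  rw [sub_sub_cancel_left, inner_neg_right, norm_neg, real_inner_smul_right, inner_sum,
    norm_smul, Real.norm_eq_abs, mul_pow, sq_abs] at hdesc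
  -- polarization: `⟪a, b⟫ ≥ (‖a‖² - ‖a - b‖²) / 2`
  have hpolar : ∀ i, (‖gradient F x‖ ^ 2 - ‖gradient F x - d i‖ ^ 2) / 2
      ≤ inner ℝ (gradient F x) (d i) := fun i => by
    nlinarith [norm_sub_sq_real (gradient F x) (d i), sq_nonneg ‖d i‖]
  have hsum := sum_le_sum fun i (_ : i ∈ s) => hpolar i
  rw [← sum_div, sum_sub_distrib, sum_const, nsmul_eq_mul] at hsum
  nlinarith [mul_le_mul_of_nonneg_left hsum hβ]

theorem round_descent_of_local_gradient_steps {N K : ℕ} {F : E → ℝ} {Fn : Fin N → E → ℝ}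
    {ξ Ln : Fin N → ℝ} {L β : ℝ} (hβ : 0 ≤ β) (hL : 0 ≤ L) (hF : Differentiable ℝ F)
    (hLipn : ∀ n x y, ‖gradient (Fn n) x - gradient (Fn n) y‖ ≤ Ln n * ‖x - y‖)
    (hgrad : ∀ x, gradient F x = ∑ n, ξ n • gradient (Fn n) x)
    (hLip : ∀ x y, ‖gradient F x - gradient F y‖ ≤ L * ‖x - y‖)
    {x : E} {u : Fin N → ℕ → E} (hu0 : ∀ n, u n 0 = x)
    (hu : ∀ n k, u n (k + 1) = u n k - β • gradient (Fn n) (u n k)) :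
    β * K / 2 * ‖gradient F x‖ ^ 2 ≤
      F x - F (x - β • ∑ n, ξ n • ∑ k ∈ range K, gradient (Fn n) (u n k))
        + L * β ^ 2 * K * N / 2 * ∑ n, ∑ k ∈ range K, ξ n ^ 2 * ‖gradient (Fn n) (u n k)‖ ^ 2
        + N * β ^ 3 / 2 * ∑ n, ∑ k ∈ range K, ξ n ^ 2 * Ln n ^ 2 * k *
            ∑ j ∈ range k, ‖gradient (Fn n) (u n j)‖ ^ 2 := by
  set d : ℕ → E := fun k => ∑ n, ξ n • gradient (Fn n) (u n k)
  have hstep : ∑ n, ξ n • ∑ k ∈ range K, gradient (Fn n) (u n k) = ∑ k ∈ range K, d k := by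
    simp only [d, smul_sum]
    exact sum_comm
  have hdrift : ∀ k, ‖gradient F x - d k‖ ^ 2 ≤
      N * β ^ 2 * ∑ n, ξ n ^ 2 * Ln n ^ 2 * k * ∑ j ∈ range k, ‖gradient (Fn n) (u n j)‖ ^ 2 := by
    intro k
    calc ‖gradient F x - d k‖ ^ 2
        = ‖∑ n, ξ n • (gradient (Fn n) (u n 0) - gradient (Fn n) (u n k))‖ ^ 2 := by
          simp only [d, hgrad, hu0, smul_sub, sum_sub_distrib]
      _ ≤ N * ∑ n, ξ n ^ 2 * ‖gradient (Fn n) (u n 0) - gradient (Fn n) (u n k)‖ ^ 2 := by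
          simpa using norm_sum_smul_sq_le_card_mul univ ξ fun n =>
            gradient (Fn n) (u n 0) - gradient (Fn n) (u n k)
      _ ≤ N * ∑ n, ξ n ^ 2 * (Ln n ^ 2 * β ^ 2 * k *
            ∑ j ∈ range k, ‖gradient (Fn n) (u n j)‖ ^ 2) := by
          gcongr with n
          exact norm_sub_sq_le_of_forall_succ_eq_sub_smul (hLipn n) (hu n) k
      _ = _ := by
          simp only [mul_sum]
          exact sum_congr rfl fun n _ => sum_congr rfl fun j _ => by ring
  have hspread : ‖∑ k ∈ range K, d k‖ ^ 2 ≤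
      K * N * ∑ n, ∑ k ∈ range K, ξ n ^ 2 * ‖gradient (Fn n) (u n k)‖ ^ 2 := by
    calc ‖∑ k ∈ range K, d k‖ ^ 2 ≤ K * ∑ k ∈ range K, ‖d k‖ ^ 2 := by
          simpa using norm_sum_sq_le_card_mul (range K) d
      _ ≤ K * ∑ k ∈ range K, N * ∑ n, ξ n ^ 2 * ‖gradient (Fn n) (u n k)‖ ^ 2 := by
          gcongr with k
          simpa using norm_sum_smul_sq_le_card_mul univ ξ fun n => gradient (Fn n) (u n k)
      _ = _ := by rw [← mul_sum, sum_comm, mul_assoc]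
  have hround := card_mul_norm_sq_le_of_sub_smul_sum hF hLip hβ (range K) d x
  rw [card_range] at hround
  rw [hstep]
  have hdrift_sum := sum_le_sum fun k (_ : k ∈ range K) => hdrift k
  rw [← mul_sum, sum_comm] at hdrift_sum
  linarith [mul_le_mul_of_nonneg_left hdrift_sum (by positivity : 0 ≤ β / 2),
    mul_le_mul_of_nonneg_left hspread (by positivity : 0 ≤ L / 2 * β ^ 2)]

end GradientSteps

theorem nonconvex_fl_convergence_bound_general
    {E : Type*} [NormedAddCommGroup E] [InnerProductSpace ℝ E] [CompleteSpace E]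
    (β : ℝ) (hβ : 0 < β) (K T : ℕ) (hK : 1 ≤ K)
    (N : ℕ) (ξ : Fin N → ℝ)
    (Ln : Fin N → ℝ) (L : ℝ) (hL : 0 < L)
    (F : E → ℝ) (Fn : Fin N → E → ℝ)
    (hF : Differentiable ℝ F)
    (hLipn : ∀ n x y, ‖gradient (Fn n) x - gradient (Fn n) y‖ ≤ Ln n * ‖x - y‖)
    (hgrad : ∀ x, gradient F x = ∑ n, ξ n • gradient (Fn n) x)
    (hLip : ∀ x y, ‖gradient F x - gradient F y‖ ≤ L * ‖x - y‖)
    (wg : ℕ → E) (w : Fin N → ℕ → ℕ → E)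
    (hw0 : ∀ n t, w n 0 t = wg t)
    (hw : ∀ n k t, w n (k + 1) t = w n k t - β • gradient (Fn n) (w n k t))
    (hg : ∀ t, wg (t + 1) =
      wg t - β • ∑ n, ξ n • ∑ k ∈ Finset.range K, gradient (Fn n) (w n k t)) :
    (1 / (T : ℝ)) * ∑ t ∈ Finset.range T, ‖gradient F (wg t)‖ ^ 2 ≤
      (2 / ((K : ℝ) * β * (T : ℝ))) * (F (wg 0) - F (wg T))
        + (L * β * N / (T : ℝ)) *
          (∑ t ∈ Finset.range T, ∑ n, ∑ k ∈ Finset.range K,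
            (ξ n) ^ 2 * ‖gradient (Fn n) (w n k t)‖ ^ 2)
        + (N * β ^ 2 / ((K : ℝ) * (T : ℝ))) *
          (∑ t ∈ Finset.range T, ∑ n, ∑ k ∈ Finset.range K,
            (ξ n) ^ 2 * (Ln n) ^ 2 * (k : ℝ) *
              ∑ j ∈ Finset.range k, ‖gradient (Fn n) (w n j t)‖ ^ 2) := by
  have hround := fun t => hg t ▸ round_descent_of_local_gradient_steps (K := K)
    hβ.le hL.le hF hLipn hgrad hLip (hw0 · t) (hw · · t)
  have htotal := sum_le_sum fun t (_ : t ∈ range T) => hround t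
  rw [← mul_sum, sum_add_distrib, sum_add_distrib, sum_range_sub', ← mul_sum, ← mul_sum]
    at htotal
  have hK₀ : (K : ℝ) ≠ 0 := Nat.cast_ne_zero.mpr (by omega)
  calc 1 / (T : ℝ) * ∑ t ∈ range T, ‖gradient F (wg t)‖ ^ 2
      = 2 / (K * β * T) * (β * K / 2 * ∑ t ∈ range T, ‖gradient F (wg t)‖ ^ 2) := by field_simp
    _ ≤ 2 / (K * β * T) * _ := mul_le_mul_of_nonneg_left htotal (by positivity)
    _ = _ := by field_simp

/-- Deterministic form of Theorem 4: non-convex FL convergence bound for the DDSRA algorithm. -/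
theorem nonconvex_fl_convergence_bound
    {E : Type*} [NormedAddCommGroup E] [InnerProductSpace ℝ E] [CompleteSpace E]
    (β : ℝ) (hβ : 0 < β) (K T : ℕ) (hK : 1 ≤ K) (hT : 1 ≤ T)
    (N : ℕ) (ξ : Fin N → ℝ) (hξ : ∀ n, 0 ≤ ξ n) (hξsum : ∑ n, ξ n = 1)
    (Ln : Fin N → ℝ) (hLn : ∀ n, 0 < Ln n) (L : ℝ) (hL : 0 < L)
    (F : E → ℝ) (Fn : Fin N → E → ℝ)
    (hF : Differentiable ℝ F) (hFn : ∀ n, Differentiable ℝ (Fn n))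
    (hLipn : ∀ n x y, ‖gradient (Fn n) x - gradient (Fn n) y‖ ≤ Ln n * ‖x - y‖)
    (hgrad : ∀ x, gradient F x = ∑ n, ξ n • gradient (Fn n) x)
    (hLip : ∀ x y, ‖gradient F x - gradient F y‖ ≤ L * ‖x - y‖)
    (wg : ℕ → E) (w : Fin N → ℕ → ℕ → E)
    (hw0 : ∀ n t, w n 0 t = wg t)
    (hw : ∀ n k t, w n (k + 1) t = w n k t - β • gradient (Fn n) (w n k t))
    (hg : ∀ t, wg (t + 1) =
      wg t - β • ∑ n, ξ n • ∑ k ∈ Finset.range K, gradient (Fn n) (w n k t)) :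
    (1 / (T : ℝ)) * ∑ t ∈ Finset.range T, ‖gradient F (wg t)‖ ^ 2 ≤
      (2 / ((K : ℝ) * β * (T : ℝ))) * (F (wg 0) - F (wg T))
        + (L * β * N / (T : ℝ)) *
          (∑ t ∈ Finset.range T, ∑ n, ∑ k ∈ Finset.range K,
            (ξ n) ^ 2 * ‖gradient (Fn n) (w n k t)‖ ^ 2)
        + (N * β ^ 2 / ((K : ℝ) * (T : ℝ))) *
          (∑ t ∈ Finset.range T, ∑ n, ∑ k ∈ Finset.range K,
            (ξ n) ^ 2 * (Ln n) ^ 2 * (k : ℝ) *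
              ∑ j ∈ Finset.range k, ‖gradient (Fn n) (w n j t)‖ ^ 2) :=
  nonconvex_fl_convergence_bound_general β hβ K T hK N ξ Ln L hL F Fn hF hLipn hgrad hLip wg w hw0
    hw hg
end
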